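/- Let G=(V,E) be a graph and H=(V,E') a subgraph with E'⊆E such that H is a disjoint union of components, each of which is an induced subgraph of G. Then for every positive definite matrix A with a_{ij}=0 whenever (i,j)∉E (i≠j), the thresholded matrix A_H is positive definite. -/

import Mathlib

/-!
Inside an `H`-component, a pair `i ≠ j` that is not an `H`-edge is not a `G`-edge either (the
components are induced), so `a_{ij} = 0` already. Hence `A_H` keeps exactly the entries of `A`
inside the components of `H`: it is the block-diagonal part of `A` for the partition of the
vertices into components. The quadratic form of that part at `x` is the sum of the quadratic
forms of `A` at the restrictions of `x` to the blocks; each is nonnegative, and positive on a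
block where `x` does not vanish.
-/

def threshold {n : ℕ} (G : SimpleGraph (Fin n)) [DecidableRel G.Adj]
    (A : Matrix (Fin n) (Fin n) ℝ) : Matrix (Fin n) (Fin n) ℝ :=
  Matrix.of fun i j => if i = j ∨ G.Adj i j then A i j else 0

namespace Matrix

variable {ι κ R : Type*} [DecidableEq κ]

/-- After ordering `ι` by the fibres of `f`, this is the block-diagonal part of `A`. -/
def fiberwise (f : ι → κ) (A : Matrix ι ι R) [Zero R] : Matrix ι ι R :=
  of fun i j => if f i = f j then A i j else 0

section Ring

variable [Ring R] [StarRing R] (f : ι → κ)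

theorem IsHermitian.fiberwise {A : Matrix ι ι R} (hA : A.IsHermitian) :
    (A.fiberwise f).IsHermitian := by
  ext i j
  simp only [conjTranspose_apply, Matrix.fiberwise, of_apply, eq_comm (a := f j)]
  split_ifs
  · exact congrFun₂ hA i j
  · exact star_zero R

variable [Fintype ι]

theorem star_dotProduct_fiberwise_mulVec (A : Matrix ι ι R) (x : ι → R) :
    star x ⬝ᵥ (A.fiberwise f *ᵥ x) =
      ∑ c ∈ Finset.univ.image f,
        star (fun i ↦ if f i = c then x i else 0) ⬝ᵥ
          (A *ᵥ fun i ↦ if f i = c then x i else 0) := by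
  simp only [dotProduct, mulVec, Matrix.fiberwise, of_apply, Finset.mul_sum]
  symm
  rw [Finset.sum_comm]
  refine Finset.sum_congr rfl fun i _ ↦ ?_
  rw [Finset.sum_comm]
  refine Finset.sum_congr rfl fun j _ ↦ ?_
  simp only [Pi.star_apply, apply_ite star, star_zero, ite_mul, zero_mul, mul_ite, mul_zero]
  rw [Finset.sum_ite_eq, if_pos (Finset.mem_image_of_mem f (Finset.mem_univ j))]

theorem PosDef.fiberwise [PartialOrder R] [IsOrderedCancelAddMonoid R] {A : Matrix ι ι R}
    (hA : A.PosDef) : (A.fiberwise f).PosDef := by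
  refine PosDef.of_dotProduct_mulVec_pos (hA.isHermitian.fiberwise f) fun x hx ↦ ?_
  obtain ⟨i, hi⟩ := Function.ne_iff.mp hx
  rw [star_dotProduct_fiberwise_mulVec]
  refine Finset.sum_pos' (fun c _ ↦ hA.posSemidef.dotProduct_mulVec_nonneg _)
    ⟨f i, Finset.mem_image_of_mem f (Finset.mem_univ i), hA.dotProduct_mulVec_pos ?_⟩
  exact Function.ne_iff.mpr ⟨i, by simpa using hi⟩

end Ring

end Matrix

open SimpleGraph in
theorem threshold_eq_fiberwise {n : ℕ} (G H : SimpleGraph (Fin n)) [DecidableRel H.Adj]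
    [DecidableEq H.ConnectedComponent]
    (hind : ∀ i j : Fin n, H.Reachable i j → G.Adj i j → H.Adj i j)
    (A : Matrix (Fin n) (Fin n) ℝ) (hzeros : ∀ i j : Fin n, i ≠ j → ¬ G.Adj i j → A i j = 0) :
    threshold H A = A.fiberwise H.connectedComponentMk := by
  ext i j
  simp only [threshold, Matrix.fiberwise, Matrix.of_apply, ConnectedComponent.eq]
  by_cases hij : i = j
  · subst hij
    simp
  by_cases hadj : H.Adj i j
  · simp [hadj, hadj.reachable]
  simp only [hij, hadj, or_self, if_false]
  split_ifs with hreach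
  · exact (hzeros i j hij fun hG ↦ hadj (hind i j hreach hG)).symm
  · rfl

theorem stmt_7 {n : ℕ} (G H : SimpleGraph (Fin n))
    [DecidableRel H.Adj]
    (hind : ∀ i j : Fin n, H.Reachable i j → G.Adj i j → H.Adj i j)
    (A : Matrix (Fin n) (Fin n) ℝ) (hA : A.PosDef)
    (hzeros : ∀ i j : Fin n, i ≠ j → ¬ G.Adj i j → A i j = 0) :
    (threshold H A).PosDef := by
  classical
  rw [threshold_eq_fiberwise G H hind A hzeros]
  exact hA.fiberwise _
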